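/- arXiv:1901.09297 — 2 statements merged into one kernel-verified Lean document; each statement's English description precedes it below -/
import Mathlib

section
/- The norm ‖EF - E∧F‖ is unchanged when E and F are replaced by their complements: ‖EF - E∧F‖ = ‖(1-E)(1-F) - (1-E)∧(1-F)‖. -/
/-- The orthogonal projection `E ∧ F` onto `ran E ∩ ran F`. -/
noncomputable def projWedge {H : Type*} [NormedAddCommGroup H] [InnerProductSpace ℂ H]
    [FiniteDimensional ℂ H] (E F : H →L[ℂ] H) : H →L[ℂ] H :=
  (LinearMap.range (E : H →ₗ[ℂ] H) ⊓ LinearMap.range (F : H →ₗ[ℂ] H)).subtypeL ∘L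
    Submodule.orthogonalProjectionOnto (LinearMap.range (E : H →ₗ[ℂ] H) ⊓ LinearMap.range (F : H →ₗ[ℂ] H))

/-!
Write `P = E ∧ F`, `P' = (1 - E) ∧ (1 - F)`, `A = E - P`, `B = F - P`. By the C*-identity,
`‖EF - P‖² = ‖ABA‖`, and likewise `‖(1 - E)(1 - F) - P'‖² = ‖A'B'A'‖` with `A' = R - A`,
`B' = R - B` for the projection `R = 1 - P - P'`. If `ABAv = μv` with `μ ≠ 0`, then
`y = Bv - μv` is nonzero (because `ran A ∩ ran B = 0`) and `A'B'A'y = μy`. So every nonzero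
eigenvalue of the positive operator `ABA` is one of `A'B'A'`, whence `‖ABA‖ ≤ ‖A'B'A'‖`.
The reverse inequality is the same statement for the complements `1 - E`, `1 - F`.
-/

open Module.End in
theorem Module.End.hasEigenvalue_sub_mul_sub_mul_sub {K V : Type*} [Field K] [AddCommGroup V]
    [Module K V] {a b r : Module.End K V} (ha : IsIdempotentElem a) (hb : IsIdempotentElem b)
    (hra : r * a = a) (hrb : r * b = b) (hab : ∀ x, a x = x → b x = x → x = 0)
    {μ : K} (hμ : μ ≠ 0) (h : (a * b * a).HasEigenvalue μ) :
    ((r - a) * (r - b) * (r - a)).HasEigenvalue μ := by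
  obtain ⟨v, hv, hv0⟩ := h.exists_hasEigenvector
  rw [mem_eigenspace_iff, mul_apply, mul_apply] at hv
  have haa (w : V) : a (a w) = a w := congr($ha w)
  have hbb (w : V) : b (b w) = b w := congr($hb w)
  have hav : a v = v := smul_right_injective V hμ <| show μ • a v = μ • v by
    rw [← map_smul, ← hv, haa]
  have habv : a (b v) = μ • v := by rwa [hav] at hv
  have hrv : r v = v := by simpa [hav] using congr($hra v)
  have hrbv : r (b v) = b v := congr($hrb v)
  have hy : b v - μ • v ≠ 0 := by
    intro hy
    have hbv : b v = μ • v := sub_eq_zero.mp hy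
    have hμ1 : μ = 1 := by
      have : (μ * μ) • v = (1 * μ) • v := calc
        (μ * μ) • v = b (μ • v) := by rw [map_smul, hbv, mul_smul]
        _ = (1 * μ) • v := by rw [← hbv, hbb, hbv, one_mul]
      exact mul_right_cancel₀ hμ (smul_left_injective K hv0 this)
    exact hv0 (hab v hav (by rw [hbv, hμ1, one_smul]))
  refine hasEigenvalue_of_hasEigenvector ⟨mem_eigenspace_iff.mpr ?_, hy⟩
  simp only [mul_apply, LinearMap.sub_apply, map_sub, map_smul, hav, habv, hrv, hrbv, hbb]
  module

theorem IsSelfAdjoint.mul_eq_self_of_mul_eq_self {R : Type*} [Mul R] [StarMul R] {e p : R}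
    (he : IsSelfAdjoint e) (hp : IsSelfAdjoint p) (h : e * p = p) : p * e = p := by
  simpa [he.star_eq, hp.star_eq] using congr(star $h)

theorem IsSelfAdjoint.norm_le_of_spectrum_diff_subset {A : Type*} [CStarAlgebra A] {s t : A}
    (hs : IsSelfAdjoint s) (h : spectrum ℂ s \ {0} ⊆ spectrum ℂ t) : ‖s‖ ≤ ‖t‖ := by
  nontriviality A
  have : spectralRadius ℂ s ≤ ‖t‖₊ := by
    refine iSup₂_le fun k hk => ?_
    rcases eq_or_ne k 0 with rfl | hk0
    · simp
    · exact_mod_cast spectrum.norm_le_norm_of_mem (h ⟨hk, hk0⟩)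
  rw [hs.spectralRadius_eq_nnnorm] at this
  exact_mod_cast this

theorem IsStarProjection.norm_mul_sub_sq {A : Type*} [NonUnitalNormedRing A] [StarRing A]
    [CStarRing A] {e f p : A} (he : IsStarProjection e) (hf : IsStarProjection f)
    (hp : IsStarProjection p) (hep : e * p = p) (hfp : f * p = p) :
    ‖e * f - p‖ ^ 2 = ‖(e - p) * (f - p) * (e - p)‖ := by
  have hpe := he.isSelfAdjoint.mul_eq_self_of_mul_eq_self hp.isSelfAdjoint hep
  have hpf := hf.isSelfAdjoint.mul_eq_self_of_mul_eq_self hp.isSelfAdjoint hfp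
  have hpp : p * p = p := hp.isIdempotentElem
  have hpfe : p * (f * e) = p := by rw [← mul_assoc, hpf, hpe]
  have hffe : f * (f * e) = f * e := by rw [← mul_assoc, hf.isIdempotentElem.eq]
  have hstar : star (e * f - p) = f * e - p := by
    simp [he.isSelfAdjoint.star_eq, hf.isSelfAdjoint.star_eq, hp.isSelfAdjoint.star_eq]
  have h1 : (e * f - p) * (f * e - p) = e * f * e - p := by
    simp only [mul_sub, sub_mul, mul_assoc, hep, hfp, hpfe, hpp, hffe]
    abel
  have h2 : (e - p) * (f - p) * (e - p) = e * f * e - p := by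
    simp only [mul_sub, sub_mul, mul_assoc, hep, hfp, hpe, hpf, hpp]
    abel
  rw [sq, ← CStarRing.norm_self_mul_star, hstar, h1, h2]

theorem ContinuousLinearMap.norm_mul_mul_le_norm_sub_mul_sub_mul_sub {H : Type*}
    [NormedAddCommGroup H] [InnerProductSpace ℂ H] [FiniteDimensional ℂ H] {a b r : H →L[ℂ] H}
    (ha : IsStarProjection a) (hb : IsStarProjection b) (hra : r * a = a) (hrb : r * b = b)
    (hab : ∀ x, a x = x → b x = x → x = 0) :
    ‖a * b * a‖ ≤ ‖(r - a) * (r - b) * (r - a)‖ := by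
  refine (hb.isSelfAdjoint.conjugate_self ha.isSelfAdjoint).norm_le_of_spectrum_diff_subset ?_
  rintro μ ⟨hμ, hμ0⟩
  rw [spectrum_eq, ← Module.End.hasEigenvalue_iff_mem_spectrum] at hμ ⊢
  have hra' : (r : H →ₗ[ℂ] H) * a = a := congr(($hra : H →ₗ[ℂ] H))
  have hrb' : (r : H →ₗ[ℂ] H) * b = b := congr(($hrb : H →ₗ[ℂ] H))
  simpa using Module.End.hasEigenvalue_sub_mul_sub_mul_sub
    (IsIdempotentElem.toLinearMap ha.isIdempotentElem)
    (IsIdempotentElem.toLinearMap hb.isIdempotentElem) hra' hrb' hab hμ0 (by simpa using hμ)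

section projWedge

variable {H : Type*} [NormedAddCommGroup H] [InnerProductSpace ℂ H] [FiniteDimensional ℂ H]
  {E F : H →L[ℂ] H}

theorem isStarProjection_projWedge (E F : H →L[ℂ] H) : IsStarProjection (projWedge E F) :=
  isStarProjection_starProjection

theorem projWedge_apply_mem (E F : H →L[ℂ] H) (x : H) :
    projWedge E F x ∈ LinearMap.range (E : H →ₗ[ℂ] H) ⊓ LinearMap.range (F : H →ₗ[ℂ] H) :=
  Submodule.coe_mem _

theorem mul_projWedge_left (hE : IsIdempotentElem E) : E * projWedge E F = projWedge E F := by
  ext x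
  exact (LinearMap.IsIdempotentElem.mem_range_iff
    (ContinuousLinearMap.IsIdempotentElem.toLinearMap hE)).mp (projWedge_apply_mem E F x).1

theorem mul_projWedge_right (hF : IsIdempotentElem F) : F * projWedge E F = projWedge E F := by
  ext x
  exact (LinearMap.IsIdempotentElem.mem_range_iff
    (ContinuousLinearMap.IsIdempotentElem.toLinearMap hF)).mp (projWedge_apply_mem E F x).2

theorem eq_zero_of_sub_projWedge_apply_eq_self (hE : IsStarProjection E) {x : H}
    (hEx : (E - projWedge E F) x = x) (hFx : (F - projWedge E F) x = x) : x = 0 := by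
  set P := projWedge E F
  have hP := isStarProjection_projWedge E F
  have hPE : P * E = P := hE.isSelfAdjoint.mul_eq_self_of_mul_eq_self hP.isSelfAdjoint
    (mul_projWedge_left hE.isIdempotentElem)
  have hPx : P x = 0 := by
    rw [← hEx, ← mul_apply_eq_comp, mul_sub, hPE, hP.isIdempotentElem.eq, sub_self, zero_apply]
  have hmem : x ∈ LinearMap.range (E : H →ₗ[ℂ] H) ⊓ LinearMap.range (F : H →ₗ[ℂ] H) := by
    rw [sub_apply, hPx, sub_zero] at hEx hFx
    exact ⟨⟨x, hEx⟩, ⟨x, hFx⟩⟩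
  rw [← hPx]
  exact (Submodule.starProjection_eq_self_iff.mpr hmem).symm

theorem norm_mul_sub_projWedge_le (hE : IsStarProjection E) (hF : IsStarProjection F) :
    ‖E * F - projWedge E F‖ ≤ ‖(1 - E) * (1 - F) - projWedge (1 - E) (1 - F)‖ := by
  set P := projWedge E F
  set P' := projWedge (1 - E) (1 - F)
  have hP : IsStarProjection P := isStarProjection_projWedge E F
  have hP' : IsStarProjection P' := isStarProjection_projWedge (1 - E) (1 - F)
  have hEP : E * P = P := mul_projWedge_left hE.isIdempotentElem
  have hFP : F * P = P := mul_projWedge_right hF.isIdempotentElem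
  have hEP' : (1 - E) * P' = P' := mul_projWedge_left hE.one_sub.isIdempotentElem
  have hFP' : (1 - F) * P' = P' := mul_projWedge_right hF.one_sub.isIdempotentElem
  have hPE := hE.isSelfAdjoint.mul_eq_self_of_mul_eq_self hP.isSelfAdjoint hEP
  have hPF := hF.isSelfAdjoint.mul_eq_self_of_mul_eq_self hP.isSelfAdjoint hFP
  have hP'E : P' * E = 0 := by
    have := hE.one_sub.isSelfAdjoint.mul_eq_self_of_mul_eq_self hP'.isSelfAdjoint hEP'
    rwa [mul_sub, mul_one, sub_eq_self] at this
  have hP'F : P' * F = 0 := by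
    have := hF.one_sub.isSelfAdjoint.mul_eq_self_of_mul_eq_self hP'.isSelfAdjoint hFP'
    rwa [mul_sub, mul_one, sub_eq_self] at this
  have hP'P : P' * P = 0 := by rw [← hEP, ← mul_assoc, hP'E, zero_mul]
  have hra : (1 - P - P') * (E - P) = E - P := by
    simp only [sub_mul, mul_sub, one_mul, hPE, hP.isIdempotentElem.eq, hP'E, hP'P]
    abel
  have hrb : (1 - P - P') * (F - P) = F - P := by
    simp only [sub_mul, mul_sub, one_mul, hPF, hP.isIdempotentElem.eq, hP'F, hP'P]
    abel
  have key := ContinuousLinearMap.norm_mul_mul_le_norm_sub_mul_sub_mul_sub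
    (hP.sub_of_mul_eq_right hE hEP) (hP.sub_of_mul_eq_right hF hFP) hra hrb
    (fun x => eq_zero_of_sub_projWedge_apply_eq_self hE)
  rw [show 1 - P - P' - (E - P) = 1 - E - P' by abel,
    show 1 - P - P' - (F - P) = 1 - F - P' by abel] at key
  rwa [← pow_le_pow_iff_left₀ (norm_nonneg _) (norm_nonneg _) two_ne_zero,
    hE.norm_mul_sub_sq hF hP hEP hFP, hE.one_sub.norm_mul_sub_sq hF.one_sub hP' hEP' hFP']

end projWedge

/-- `‖EF - E∧F‖` is unchanged when `E` and `F` are replaced by their complements. -/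
theorem stmt4 {H : Type*} [NormedAddCommGroup H] [InnerProductSpace ℂ H]
    [FiniteDimensional ℂ H] (E F : H →L[ℂ] H)
    (hE : IsSelfAdjoint E) (hE2 : E ∘L E = E)
    (hF : IsSelfAdjoint F) (hF2 : F ∘L F = F) :
    ‖E ∘L F - projWedge E F‖ = ‖(1 - E) ∘L (1 - F) - projWedge (1 - E) (1 - F)‖ := by
  have hEp : IsStarProjection E := ⟨hE2, hE⟩
  have hFp : IsStarProjection F := ⟨hF2, hF⟩
  refine le_antisymm (norm_mul_sub_projWedge_le hEp hFp) ?_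
  have h := norm_mul_sub_projWedge_le hEp.one_sub hFp.one_sub
  rw [sub_sub_cancel, sub_sub_cancel] at h
  exact h
end

section
/- For orthogonal projections P and Q on a finite-dimensional Hilbert space, ‖PQ - P∧Q‖ equals the supremum of |⟨φ,ψ⟩|/(‖φ‖‖ψ‖) over nonzero φ ∈ ran P, ψ ∈ ran Q with φ, ψ orthogonal to ran P ∩ ran Q. -/
/-!
Write `F = P ∧ Q` and `W = ran P ∩ ran Q`. As `F ≤ P` and `F ≤ Q`, the differences `P - F` and
`Q - F` are orthogonal projections onto `ran P ⊖ W` and `ran Q ⊖ W`, and `(P - F)(Q - F) = PQ - F`.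
So it suffices to show `‖pq‖ = sup |⟪φ, ψ⟫| / (‖φ‖‖ψ‖)` over `φ ∈ ran p`, `ψ ∈ ran q` for any two
orthogonal projections `p`, `q`. The bound `≥` is Cauchy–Schwarz, since `⟪φ, ψ⟫ = ⟪φ, pqψ⟫`;
for `≤`, the pair `ψ = qx`, `φ = pψ = pqx` has `⟪φ, ψ⟫ = ‖φ‖²`, so `‖pqx‖ ≤ c‖qx‖ ≤ c‖x‖` for the
supremum `c`.
-/

open scoped InnerProductSpace

namespace IsStarProjection

variable {R : Type*} [NonUnitalRing R] [StarRing R] {p q f : R}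

theorem mul_eq_right_iff_mul_eq_left (hp : IsStarProjection p) (hf : IsStarProjection f) :
    p * f = f ↔ f * p = f := by
  rw [← star_inj, star_mul, hp.isSelfAdjoint.star_eq, hf.isSelfAdjoint.star_eq]

theorem sub_mul_sub_of_mul_eq_left (hp : IsStarProjection p) (hf : IsStarProjection f)
    (hfp : f * p = f) (hfq : f * q = f) : (p - f) * (q - f) = p * q - f := by
  have hpf := (hp.mul_eq_right_iff_mul_eq_left hf).2 hfp
  simp only [sub_mul, mul_sub, hpf, hfq, hf.isIdempotentElem.eq]
  abel

variable {𝕜 E : Type*} [RCLike 𝕜] [NormedAddCommGroup E] [InnerProductSpace 𝕜 E] [CompleteSpace E]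
  {p q f : E →L[𝕜] E}

theorem apply_apply (hp : IsStarProjection p) (x : E) : p (p x) = p x :=
  congr($hp.isIdempotentElem.eq x)

theorem inner_apply_left (hp : IsStarProjection p) (x y : E) : ⟪p x, y⟫_𝕜 = ⟪x, p y⟫_𝕜 :=
  hp.isSelfAdjoint.isSymmetric x y

theorem mem_range_iff (hp : IsStarProjection p) {x : E} : x ∈ p.range ↔ p x = x :=
  LinearMap.IsIdempotentElem.mem_range_iff <|
    ContinuousLinearMap.IsIdempotentElem.toLinearMap hp.isIdempotentElem

theorem inner_apply_self (hp : IsStarProjection p) (x : E) : ⟪p x, x⟫_𝕜 = (‖p x‖ : 𝕜) ^ 2 := by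
  rw [← inner_self_eq_norm_sq_to_K, ← hp.inner_apply_left, hp.apply_apply]

theorem norm_apply_le (hp : IsStarProjection p) (x : E) : ‖p x‖ ≤ ‖x‖ := by
  have h : ‖p x‖ ^ 2 ≤ ‖p x‖ * ‖x‖ := by
    calc ‖p x‖ ^ 2 = ‖⟪p x, x⟫_𝕜‖ := by simp [hp.inner_apply_self]
      _ ≤ ‖p x‖ * ‖x‖ := norm_inner_le_norm _ _
  nlinarith [norm_nonneg (p x), norm_nonneg x]

theorem range_sub_of_mul_eq_left (hp : IsStarProjection p) (hf : IsStarProjection f)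
    (hfp : f * p = f) :
    (p - f).range = p.range ⊓ f.rangeᗮ := by
  have hpf := (hp.mul_eq_right_iff_mul_eq_left hf).2 hfp
  ext x
  rw [(hf.sub_of_mul_eq_left hp hfp).mem_range_iff, Submodule.mem_inf, hp.mem_range_iff,
    ContinuousLinearMap.IsStarNormal.orthogonal_range hf.isStarNormal, LinearMap.mem_ker,
    ContinuousLinearMap.coe_coe, sub_apply]
  have hpfx : p (f x) = f x := congr($hpf x)
  have hfpx : f (p x) = f x := congr($hfp x)
  refine ⟨fun h => ?_, fun ⟨hpx, hfx⟩ => by simp [hpx, hfx]⟩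
  have hfx : f x = 0 := by rw [← h, map_sub, hfpx, hf.apply_apply, sub_self]
  exact ⟨by rw [← h, map_sub, hp.apply_apply, hpfx], hfx⟩

theorem norm_inner_le_norm_mul_mul (hp : IsStarProjection p) (hq : IsStarProjection q) {φ ψ : E}
    (hφ : φ ∈ p.range) (hψ : ψ ∈ q.range) : ‖⟪φ, ψ⟫_𝕜‖ ≤ ‖p * q‖ * (‖φ‖ * ‖ψ‖) := by
  have h : ⟪φ, ψ⟫_𝕜 = ⟪φ, (p * q) ψ⟫_𝕜 := by
    rw [mul_apply_eq_comp, hq.mem_range_iff.1 hψ, ← hp.inner_apply_left,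
      hp.mem_range_iff.1 hφ]
  calc ‖⟪φ, ψ⟫_𝕜‖ = ‖⟪φ, (p * q) ψ⟫_𝕜‖ := by rw [h]
    _ ≤ ‖φ‖ * ‖(p * q) ψ‖ := norm_inner_le_norm _ _
    _ ≤ ‖φ‖ * (‖p * q‖ * ‖ψ‖) := by gcongr; exact (p * q).le_opNorm ψ
    _ = ‖p * q‖ * (‖φ‖ * ‖ψ‖) := by ring

theorem norm_mul_eq_sSup (hp : IsStarProjection p) (hq : IsStarProjection q) :
    ‖p * q‖ = sSup {r : ℝ | ∃ φ ψ : E, φ ∈ p.range ∧ ψ ∈ q.range ∧ φ ≠ 0 ∧ ψ ≠ 0 ∧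
      r = ‖⟪φ, ψ⟫_𝕜‖ / (‖φ‖ * ‖ψ‖)} := by
  set S := {r : ℝ | ∃ φ ψ : E, φ ∈ p.range ∧ ψ ∈ q.range ∧ φ ≠ 0 ∧ ψ ≠ 0 ∧
      r = ‖⟪φ, ψ⟫_𝕜‖ / (‖φ‖ * ‖ψ‖)}
  have hS_le : ∀ r ∈ S, r ≤ ‖p * q‖ := by
    rintro _ ⟨φ, ψ, hφ, hψ, hφ0, hψ0, rfl⟩
    rw [div_le_iff₀ (by positivity)]
    exact norm_inner_le_norm_mul_mul hp hq hφ hψ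
  have hS_nonneg : ∀ r ∈ S, 0 ≤ r := by
    rintro _ ⟨φ, ψ, -, -, -, -, rfl⟩
    positivity
  refine le_antisymm ((p * q).opNorm_le_bound (Real.sSup_nonneg hS_nonneg) fun x => ?_)
    (Real.sSup_le hS_le (norm_nonneg _))
  rw [mul_apply_eq_comp]
  by_cases hφ0 : p (q x) = 0
  · rw [hφ0, norm_zero]
    exact mul_nonneg (Real.sSup_nonneg hS_nonneg) (norm_nonneg x)
  have hψ0 : q x ≠ 0 := fun h => hφ0 (by rw [h, map_zero])
  have hmem : ‖p (q x)‖ / ‖q x‖ ∈ S := by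
    refine ⟨p (q x), q x, ⟨q x, rfl⟩, ⟨x, rfl⟩, hφ0, hψ0, ?_⟩
    rw [hp.inner_apply_self]
    field_simp
    simp
  have hle := le_csSup ⟨_, hS_le⟩ hmem
  rw [div_le_iff₀ (norm_pos_iff.2 hψ0)] at hle
  calc ‖p (q x)‖ ≤ sSup S * ‖q x‖ := hle
    _ ≤ sSup S * ‖x‖ := by gcongr; exacts [Real.sSup_nonneg hS_nonneg, hq.norm_apply_le x]

end IsStarProjection

/-- `‖PQ - P∧Q‖` equals the supremum of `|⟨φ,ψ⟩|/(‖φ‖‖ψ‖)` over nonzero `φ ∈ ran P`,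
`ψ ∈ ran Q` orthogonal to `ran P ∩ ran Q` (the supremum of the empty set being `0`). -/
theorem stmt5 {H : Type*} [NormedAddCommGroup H] [InnerProductSpace ℂ H]
    [FiniteDimensional ℂ H] (P Q : H →L[ℂ] H)
    (hP : IsSelfAdjoint P) (hP2 : P ∘L P = P)
    (hQ : IsSelfAdjoint Q) (hQ2 : Q ∘L Q = Q) :
    ‖P ∘L Q - projWedge P Q‖ =
      sSup {r : ℝ | ∃ φ ψ : H, φ ∈ LinearMap.range (P : H →ₗ[ℂ] H) ∧ ψ ∈ LinearMap.range (Q : H →ₗ[ℂ] H) ∧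
        φ ≠ 0 ∧ ψ ≠ 0 ∧
        φ ∈ (LinearMap.range (P : H →ₗ[ℂ] H) ⊓ LinearMap.range (Q : H →ₗ[ℂ] H) : Submodule ℂ H)ᗮ ∧
        ψ ∈ (LinearMap.range (P : H →ₗ[ℂ] H) ⊓ LinearMap.range (Q : H →ₗ[ℂ] H) : Submodule ℂ H)ᗮ ∧
        r = ‖(inner ℂ φ ψ : ℂ)‖ / (‖φ‖ * ‖ψ‖)} := by
  have hPproj : IsStarProjection P := ⟨hP2, hP⟩
  have hQproj : IsStarProjection Q := ⟨hQ2, hQ⟩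
  set W := LinearMap.range (P : H →ₗ[ℂ] H) ⊓ LinearMap.range (Q : H →ₗ[ℂ] H)
  have hf : IsStarProjection (projWedge P Q) := isStarProjection_starProjection
  have hfP : projWedge P Q * P = projWedge P Q :=
    (hPproj.mul_eq_right_iff_mul_eq_left hf).1 <| ContinuousLinearMap.ext fun x =>
      hPproj.mem_range_iff.1 (W.starProjection_apply_mem x).1
  have hfQ : projWedge P Q * Q = projWedge P Q :=
    (hQproj.mul_eq_right_iff_mul_eq_left hf).1 <| ContinuousLinearMap.ext fun x =>
      hQproj.mem_range_iff.1 (W.starProjection_apply_mem x).2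
  rw [show P ∘L Q = P * Q from rfl, ← hPproj.sub_mul_sub_of_mul_eq_left hf hfP hfQ,
    IsStarProjection.norm_mul_eq_sSup (hf.sub_of_mul_eq_left hPproj hfP)
      (hf.sub_of_mul_eq_left hQproj hfQ),
    hPproj.range_sub_of_mul_eq_left hf hfP, hQproj.range_sub_of_mul_eq_left hf hfQ,
    show (projWedge P Q).range = W from W.range_starProjection]
  congr! 3 with r φ ψ
  simp only [Submodule.mem_inf]
  tauto
end
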